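/- arXiv:1407.1569 — 2 statements merged into one kernel-verified Lean document; each statement's English description precedes it below -/
import Mathlib

section
/- Let n ≥ 1, let L ∈ ℝ^{n×n} be a symmetric positive semidefinite matrix with L·1 = 0 and rank n − 1, and let L⁺ be its Moore–Penrose pseudoinverse. Fix a gain k > 0. Then a node s* ∈ {1,…,n} minimizes tr((L + k·E_{s,s})⁻¹) over all s ∈ {1,…,n} if and only if L⁺_{s*,s*} ≤ L⁺_{s,s} for all s, i.e., if and only if s* has maximal information centrality. The same characterization holds for the noise-free limit, i.e., for minimizing lim_{k→∞} tr((L + k·E_{s,s})⁻¹). -/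
/-!
The Penrose conditions make `Q = I - L L⁺` symmetric with `L Q = 0`; since `ker L = span 1`, the
columns of `Q` are constant, so `L L⁺ = I - J / n`, and `L⁺` has zero row and column sums.
With these one checks that `(L + κ E_{ss})⁻¹` has entries
`L⁺ᵢⱼ - L⁺ₛⱼ - L⁺ᵢₛ + L⁺ₛₛ + 1/κ`, so its trace is `tr L⁺ + n L⁺ₛₛ + n/κ`: for every fixed `κ`,
and in the limit `κ → ∞`, an increasing affine function of `L⁺ₛₛ`.
-/

open Matrix Filter

namespace Matrix

variable {ι : Type*} [Fintype ι] {L Lp : Matrix ι ι ℝ}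

theorem mul_pinv_mulVec_one (hL : L.IsSymm) (hL1 : L *ᵥ 1 = 0)
    (hp3 : (L * Lp)ᵀ = L * Lp) : (L * Lp) *ᵥ 1 = 0 := by
  rw [← hp3, mulVec_transpose, ← vecMul_vecMul, ← mulVec_transpose L, hL.eq, hL1, zero_vecMul]

theorem pinv_mulVec_one (hLLp1 : (L * Lp) *ᵥ 1 = 0) (hp2 : Lp * L * Lp = Lp) :
    Lp *ᵥ 1 = 0 := by
  rw [← hp2, Matrix.mul_assoc, ← mulVec_mulVec, hLLp1, mulVec_zero]

theorem one_vecMul_pinv (hL1 : L *ᵥ 1 = 0) (hp2 : Lp * L * Lp = Lp)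
    (hp4 : (Lp * L)ᵀ = Lp * L) : 1 ᵥ* Lp = 0 := by
  rw [← hp2, ← vecMul_vecMul, ← mulVec_transpose (Lp * L), hp4, ← mulVec_mulVec, hL1,
    mulVec_zero, zero_vecMul]

theorem ker_mulVecLin_eq_span_one [Nonempty ι] (hL1 : L *ᵥ 1 = 0)
    (hrank : L.rank = Fintype.card ι - 1) :
    LinearMap.ker L.mulVecLin = ℝ ∙ (1 : ι → ℝ) := by
  symm
  refine Submodule.eq_of_le_of_finrank_eq ?_ ?_
  · rwa [Submodule.span_le, Set.singleton_subset_iff]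
  · have hsum := LinearMap.finrank_range_add_finrank_ker L.mulVecLin
    rw [Module.finrank_fintype_fun_eq_card] at hsum
    have hr : Module.finrank ℝ (LinearMap.range L.mulVecLin) = Fintype.card ι - 1 := hrank
    rw [finrank_span_singleton one_ne_zero]
    have := Fintype.card_pos (α := ι)
    omega

theorem apply_eq_apply_of_mul_eq_zero {Q : Matrix ι ι ℝ}
    (hker : LinearMap.ker L.mulVecLin = ℝ ∙ (1 : ι → ℝ)) (hLQ : L * Q = 0) (i i' j : ι) :
    Q i j = Q i' j := by
  have hcol : (fun i => Q i j) ∈ LinearMap.ker L.mulVecLin := by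
    ext i
    exact congrFun (congrFun hLQ i) j
  obtain ⟨c, hc⟩ := Submodule.mem_span_singleton.mp (hker ▸ hcol)
  rw [← congrFun hc i, ← congrFun hc i']
  rfl

variable [DecidableEq ι]

theorem mul_pinv_apply [Nonempty ι] (hL : L.IsSymm) (hL1 : L *ᵥ 1 = 0)
    (hker : LinearMap.ker L.mulVecLin = ℝ ∙ (1 : ι → ℝ))
    (hp1 : L * Lp * L = L) (hp3 : (L * Lp)ᵀ = L * Lp) (i j : ι) :
    (L * Lp) i j = (1 : Matrix ι ι ℝ) i j - (Fintype.card ι : ℝ)⁻¹ := by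
  set Q := 1 - L * Lp with hQ
  have hQsymm : Qᵀ = Q := by rw [transpose_sub, transpose_one, hp3]
  have hQL : Q * L = 0 := by rw [Matrix.sub_mul, Matrix.one_mul, hp1, sub_self]
  have hLQ : L * Q = 0 := by
    rw [← hL.eq, ← hQsymm, ← transpose_mul, hQL, transpose_zero]
  have hQ1 : Q *ᵥ 1 = 1 := by
    rw [sub_mulVec, one_mulVec, mul_pinv_mulVec_one hL hL1 hp3, sub_zero]
  obtain ⟨a⟩ := ‹Nonempty ι›
  have hconst : ∀ i j, Q i j = Q a a := fun i j =>
    calc Q i j = Q a j := apply_eq_apply_of_mul_eq_zero hker hLQ i a j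
      _ = Q j a := congrFun (congrFun hQsymm.symm a) j
      _ = Q a a := apply_eq_apply_of_mul_eq_zero hker hLQ j a a
  have hrow : (Fintype.card ι : ℝ) * Q a a = 1 := by
    simpa only [mulVec, dotProduct, Pi.one_apply, mul_one, hconst a, Finset.sum_const,
      Finset.card_univ, nsmul_eq_mul] using congrFun hQ1 a
  have hQij : Q i j = (Fintype.card ι : ℝ)⁻¹ := by
    rw [hconst, eq_inv_of_mul_eq_one_right hrow]
  rw [hQ, sub_apply] at hQij
  linarith

theorem inv_add_smul_single_eq (hL1 : L *ᵥ 1 = 0)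
    (hLLp : ∀ i j, (L * Lp) i j = (1 : Matrix ι ι ℝ) i j - (Fintype.card ι : ℝ)⁻¹)
    {κ : ℝ} (hκ : κ ≠ 0) (s : ι) :
    (L + κ • single s s 1)⁻¹ = of fun i j => Lp i j - Lp s j - Lp i s + Lp s s + κ⁻¹ := by
  refine inv_eq_right_inv ?_
  have hrow : ∀ i, ∑ t, L i t = 0 := fun i => by
    simpa [mulVec, dotProduct] using congrFun hL1 i
  ext i j
  rw [Matrix.add_mul, add_apply, smul_mul, smul_apply]
  have hLX : (L * of fun i j => Lp i j - Lp s j - Lp i s + Lp s s + κ⁻¹) i j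
      = (L * Lp) i j - (L * Lp) i s := by
    simp only [mul_apply, of_apply, mul_add, mul_sub, Finset.sum_add_distrib,
      Finset.sum_sub_distrib, ← Finset.sum_mul, hrow, zero_mul]
    ring
  rw [hLX, hLLp, hLLp]
  by_cases hi : i = s
  · subst hi
    simp only [single_mul_apply_same, of_apply, one_mul, smul_eq_mul, one_apply_eq]
    field_simp
    ring
  · simp [single_mul_apply_of_ne _ _ _ _ _ hi, one_apply_ne hi]

theorem trace_inv_add_smul_single (hL1 : L *ᵥ 1 = 0)
    (hLLp : ∀ i j, (L * Lp) i j = (1 : Matrix ι ι ℝ) i j - (Fintype.card ι : ℝ)⁻¹)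
    (hLp1 : Lp *ᵥ 1 = 0) (h1Lp : 1 ᵥ* Lp = 0) {κ : ℝ} (hκ : κ ≠ 0) (s : ι) :
    (L + κ • single s s 1)⁻¹.trace
      = Lp.trace + Fintype.card ι * Lp s s + Fintype.card ι * κ⁻¹ := by
  have hrow : ∑ i, Lp s i = 0 := by simpa [mulVec, dotProduct] using congrFun hLp1 s
  have hcol : ∑ i, Lp i s = 0 := by simpa [vecMul, dotProduct] using congrFun h1Lp s
  rw [inv_add_smul_single_eq hL1 hLLp hκ s]
  simp only [trace, diag, of_apply, Finset.sum_add_distrib, Finset.sum_sub_distrib, hrow, hcol,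
    Finset.sum_const, Finset.card_univ, nsmul_eq_mul]
  ring

theorem tendsto_trace_inv_add_smul_single (hL1 : L *ᵥ 1 = 0)
    (hLLp : ∀ i j, (L * Lp) i j = (1 : Matrix ι ι ℝ) i j - (Fintype.card ι : ℝ)⁻¹)
    (hLp1 : Lp *ᵥ 1 = 0) (h1Lp : 1 ᵥ* Lp = 0) (s : ι) :
    Tendsto (fun κ : ℝ => (L + κ • single s s 1)⁻¹.trace) atTop
      (nhds (Lp.trace + Fintype.card ι * Lp s s)) := by
  have h : Tendsto (fun κ : ℝ => Lp.trace + Fintype.card ι * Lp s s + Fintype.card ι * κ⁻¹)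
      atTop (nhds (Lp.trace + Fintype.card ι * Lp s s + Fintype.card ι * 0)) :=
    tendsto_const_nhds.add (tendsto_inv_atTop_zero.const_mul _)
  rw [mul_zero, add_zero] at h
  refine h.congr' ((eventually_ne_atTop 0).mono fun κ hκ => ?_)
  exact (trace_inv_add_smul_single hL1 hLLp hLp1 h1Lp hκ s).symm

end Matrix

theorem stmt_4_general {n : ℕ} (L Lp : Matrix (Fin n) (Fin n) ℝ)
    (hL : L.PosSemidef) (hL1 : L *ᵥ (fun _ => (1 : ℝ)) = 0) (hrank : L.rank = n - 1)
    (hp1 : L * Lp * L = L) (hp2 : Lp * L * Lp = Lp)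
    (hp3 : (L * Lp)ᵀ = L * Lp) (hp4 : (Lp * L)ᵀ = Lp * L)
    (k : ℝ) (hk : 0 < k) (sstar : Fin n) :
    ((∀ s : Fin n,
        ((L + k • Matrix.single sstar sstar (1 : ℝ))⁻¹).trace ≤
          ((L + k • Matrix.single s s (1 : ℝ))⁻¹).trace) ↔
      ∀ s : Fin n, Lp sstar sstar ≤ Lp s s) ∧
    ∀ Lim : Fin n → ℝ,
      (∀ s : Fin n,
        Tendsto (fun κ : ℝ => ((L + κ • Matrix.single s s (1 : ℝ))⁻¹).trace)
          atTop (nhds (Lim s))) →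
      ((∀ s : Fin n, Lim sstar ≤ Lim s) ↔ ∀ s : Fin n, Lp sstar sstar ≤ Lp s s) := by
  have : Nonempty (Fin n) := ⟨sstar⟩
  have hLsymm : L.IsSymm := isHermitian_iff_isSymm.mp hL.isHermitian
  have hker := ker_mulVecLin_eq_span_one hL1 (by rwa [Fintype.card_fin])
  have hLLp := mul_pinv_apply hLsymm hL1 hker hp1 hp3
  have hLp1 := pinv_mulVec_one (mul_pinv_mulVec_one hLsymm hL1 hp3) hp2
  have h1Lp := one_vecMul_pinv hL1 hp2 hp4
  have hn : (0 : ℝ) < Fintype.card (Fin n) := by exact_mod_cast Fintype.card_pos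
  refine ⟨?_, fun Lim hLim => ?_⟩
  · simp only [trace_inv_add_smul_single hL1 hLLp hLp1 h1Lp hk.ne', add_le_add_iff_right,
      add_le_add_iff_left, mul_le_mul_iff_right₀ hn]
  · have hLim_eq s := tendsto_nhds_unique (hLim s)
      (tendsto_trace_inv_add_smul_single hL1 hLLp hLp1 h1Lp s)
    simp only [hLim_eq, add_le_add_iff_left, mul_le_mul_iff_right₀ hn]

/-- For the Laplacian `L` of a connected undirected weighted graph with
Moore–Penrose pseudoinverse `Lp` and gain `k > 0`, a node `sstar` minimizes
`tr((L + k E_{s,s})⁻¹)` over all nodes `s` iff `L⁺_{sstar,sstar} ≤ L⁺_{s,s}` for all `s`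
(i.e., iff `sstar` has maximal information centrality); and the same characterization holds
for minimizing the noise-free limit `lim_{k→∞} tr((L + k E_{s,s})⁻¹)`. -/
theorem stmt_4 {n : ℕ} (hn : 1 ≤ n) (L Lp : Matrix (Fin n) (Fin n) ℝ)
    (hL : L.PosSemidef) (hL1 : L *ᵥ (fun _ => (1 : ℝ)) = 0) (hrank : L.rank = n - 1)
    (hp1 : L * Lp * L = L) (hp2 : Lp * L * Lp = Lp)
    (hp3 : (L * Lp)ᵀ = L * Lp) (hp4 : (Lp * L)ᵀ = Lp * L)
    (k : ℝ) (hk : 0 < k) (sstar : Fin n) :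
    ((∀ s : Fin n,
        ((L + k • Matrix.single sstar sstar (1 : ℝ))⁻¹).trace ≤
          ((L + k • Matrix.single s s (1 : ℝ))⁻¹).trace) ↔
      ∀ s : Fin n, Lp sstar sstar ≤ Lp s s) ∧
    ∀ Lim : Fin n → ℝ,
      (∀ s : Fin n,
        Tendsto (fun κ : ℝ => ((L + κ • Matrix.single s s (1 : ℝ))⁻¹).trace)
          atTop (nhds (Lim s))) →
      ((∀ s : Fin n, Lim sstar ≤ Lim s) ↔ ∀ s : Fin n, Lp sstar sstar ≤ Lp s s) :=
  stmt_4_general L Lp hL hL1 hrank hp1 hp2 hp3 hp4 k hk sstar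
end

section
/- Let n ≥ 4 be an even integer, let C_n be the cycle graph on n vertices with Laplacian L, and fix a gain k > 0. For distinct vertices s₁ ≠ s₂, let T(s₁,s₂) = tr((L + k·E_{s₁,s₁} + k·E_{s₂,s₂})⁻¹) (proportional to the total system error with two noise-corrupted leaders s₁, s₂). Then T(s₁,s₂) is minimized over all pairs of distinct vertices exactly at pairs whose geodesic distance in C_n equals n/2 (antipodal pairs); equivalently, T(s₁,s₂) ≥ T(t₁,t₂) whenever dist(t₁,t₂) = n/2, with equality if and only if dist(s₁,s₂) = n/2. -/
/-!
The function `H u = cycleGreen n u = u (n - u) / 2` on `ZMod n` is a potential for the cycle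
Laplacian: `2 H u - H (u - 1) - H (u + 1) = 1 - n [u = 0]`. Translates of `H` therefore give the
columns of `(L + k E₁₁ + k E₂₂)⁻¹` in closed form, and summing its diagonal yields
`T = n / (2k) + (n² - 1) / 6 - h / 2 - k h (h + 1) / (6 (n + k h))` with
`h = H (s₁ - s₂) = d (n - d) / 2`, `d` the distance between the leaders. This is strictly
decreasing in `h ≥ 0`, and `d (n - d)` is strictly increasing for `d ≤ n / 2`, so `T` is
smallest exactly at antipodal pairs.
-/

open Matrix Finset

lemma sum_range_natCast (t : ℕ) : ∑ x ∈ range t, (x : ℝ) = t * (t - 1) / 2 := by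
  induction t with
  | zero => simp
  | succ t ih => rw [sum_range_succ, ih]; push_cast; ring

lemma sum_range_natCast_sq (t : ℕ) :
    ∑ x ∈ range t, (x : ℝ) ^ 2 = t * (t - 1) * (2 * t - 1) / 6 := by
  induction t with
  | zero => simp
  | succ t ih => rw [sum_range_succ, ih]; push_cast; ring

lemma sum_range_mul_sub (t : ℕ) : ∑ x ∈ range t, (x : ℝ) * (t - x) = t * (t ^ 2 - 1) / 6 := by
  simp only [mul_sub, ← sq, sum_sub_distrib, ← sum_mul, sum_range_natCast, sum_range_natCast_sq]
  ring

lemma sum_range_sub_two_mul_sq (t : ℕ) :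
    ∑ x ∈ range t, ((t : ℝ) - 2 * (x : ℝ)) ^ 2 = (t : ℝ) * ((t : ℝ) ^ 2 + 2) / 3 := by
  simp only [sub_sq, mul_pow, sum_add_distrib, sum_sub_distrib, ← mul_sum, sum_const,
    card_range, nsmul_eq_mul, sum_range_natCast, sum_range_natCast_sq]
  ring

lemma sum_zmod_val {n : ℕ} [NeZero n] {M : Type*} [AddCommMonoid M] (g : ℕ → M) :
    ∑ v : ZMod n, g v.val = ∑ x ∈ range n, g x := by
  obtain ⟨m, rfl⟩ := Nat.exists_eq_succ_of_ne_zero (NeZero.ne n)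
  exact (sum_range g).symm

def cycleLaplacian (n : ℕ) : Matrix (ZMod n) (ZMod n) ℝ :=
  of fun i j => if i = j then 2 else if i - j = 1 ∨ j - i = 1 then -1 else 0

lemma cycleLaplacian_mul_apply {n : ℕ} [NeZero n] (hn : 3 ≤ n) (M : Matrix (ZMod n) (ZMod n) ℝ)
    (u v : ZMod n) : (cycleLaplacian n * M) u v = 2 * M u v - M (u - 1) v - M (u + 1) v := by
  have h1 : (1 : ZMod n) ≠ 0 := by
    have : Fact (1 < n) := ⟨by omega⟩
    exact one_ne_zero
  have h2 : (2 : ZMod n) ≠ 0 := by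
    intro h
    have := Nat.le_of_dvd two_pos ((ZMod.natCast_eq_zero_iff 2 n).1 (by exact_mod_cast h))
    omega
  have row : ∀ w, cycleLaplacian n u w =
      (if w = u then 2 else 0) - (if w = u - 1 then 1 else 0) - (if w = u + 1 then 1 else 0) := by
    intro w
    have hl : u - 1 ≠ u := fun h => h1 (by linear_combination -h)
    have hr : u + 1 ≠ u := fun h => h1 (by linear_combination h)
    have hlr : u - 1 ≠ u + 1 := fun h => h2 (by linear_combination -h)
    have hl' : u - w = 1 ↔ w = u - 1 :=
      ⟨fun h => by linear_combination -h, fun h => by linear_combination -h⟩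
    have hr' : w - u = 1 ↔ w = u + 1 :=
      ⟨fun h => by linear_combination h, fun h => by linear_combination h⟩
    simp only [cycleLaplacian, of_apply, hl', hr', eq_comm (a := u)]
    split_ifs <;> grind
  simp [mul_apply, row, sub_mul, ite_mul, sum_sub_distrib]

noncomputable def cycleGreen (n : ℕ) (u : ZMod n) : ℝ := u.val * (n - u.val) / 2

@[simp] lemma cycleGreen_zero {n : ℕ} : cycleGreen n 0 = 0 := by simp [cycleGreen]

section CycleGreen

variable {n : ℕ} [NeZero n]

lemma cycleGreen_neg (u : ZMod n) : cycleGreen n (-u) = cycleGreen n u := by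
  by_cases hu : u = 0
  · rw [hu, neg_zero]
  · simp only [cycleGreen, ZMod.neg_val, if_neg hu, Nat.cast_sub (ZMod.val_lt u).le]
    ring

lemma cycleGreen_sub_comm (a b : ZMod n) : cycleGreen n (a - b) = cycleGreen n (b - a) := by
  rw [← neg_sub, cycleGreen_neg]

lemma cycleGreen_nonneg (u : ZMod n) : 0 ≤ cycleGreen n u := by
  have : (u.val : ℝ) ≤ n := by exact_mod_cast (ZMod.val_lt u).le
  have := sub_nonneg.2 this
  unfold cycleGreen
  positivity

lemma natCast_add_mul_cycleGreen_pos {k : ℝ} (hk : 0 ≤ k) (u : ZMod n) :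
    0 < (n : ℝ) + k * cycleGreen n u := by
  have := cycleGreen_nonneg u
  have : (0 : ℝ) < n := by exact_mod_cast NeZero.pos n
  positivity

lemma cycleGreen_add_one (u : ZMod n) :
    cycleGreen n (u + 1) = (u.val + 1) * (n - (u.val + 1)) / 2 := by
  have hval : (u + 1).val = (u.val + 1) % n := by
    rw [ZMod.val_add, ZMod.val_one_eq_one_mod, Nat.add_mod_mod]
  rcases (Nat.add_one_le_of_lt (ZMod.val_lt u)).lt_or_eq with h | h
  · simp [cycleGreen, hval, Nat.mod_eq_of_lt h]
  · have h' : ((u.val : ℝ) + 1) = n := by exact_mod_cast h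
    rw [cycleGreen, hval, h, Nat.mod_self, h']
    simp

lemma cycleGreen_sub_one_sub_add_add_one_sub (u w : ZMod n) :
    cycleGreen n (u - 1 - w) + cycleGreen n (u + 1 - w) =
      2 * cycleGreen n (u - w) - 1 + n * if u = w then 1 else 0 := by
  rw [sub_right_comm, add_sub_right_comm]
  simp only [← sub_eq_zero (a := u)]
  generalize u - w = u
  rw [← cycleGreen_neg (u - 1), neg_sub', sub_neg_eq_add, cycleGreen_add_one, cycleGreen_add_one]
  by_cases hu : u = 0
  · simp [hu, cycleGreen]
    ring
  · simp only [ZMod.neg_val, if_neg hu, Nat.cast_sub (ZMod.val_lt u).le, cycleGreen]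
    ring

lemma sum_cycleGreen : ∑ u : ZMod n, cycleGreen n u = n * ((n : ℝ) ^ 2 - 1) / 12 := by
  calc ∑ u : ZMod n, cycleGreen n u = ∑ x ∈ range n, (x : ℝ) * (n - x) / 2 :=
        sum_zmod_val fun x : ℕ => (x : ℝ) * (n - x) / 2
    _ = _ := by rw [← sum_div, sum_range_mul_sub]; ring

lemma sum_sq_cycleGreen_add_sub (δ : ZMod n) :
    ∑ w : ZMod n, (cycleGreen n (w + δ) - cycleGreen n w) ^ 2 =
      n * cycleGreen n δ * (cycleGreen n δ + 1) / 3 := by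
  set d := δ.val
  obtain ⟨t, ht⟩ : ∃ t, n = t + d := ⟨n - d, by have := ZMod.val_lt δ; omega⟩
  have htR : (n : ℝ) = t + d := by exact_mod_cast ht
  have hval : ∀ w : ZMod n, (w + δ).val = (w.val + d) % n := fun w => ZMod.val_add w δ
  calc ∑ w : ZMod n, (cycleGreen n (w + δ) - cycleGreen n w) ^ 2
      = ∑ x ∈ range (t + d),
          (((x + d) % n : ℕ) * (n - ((x + d) % n : ℕ)) / 2 - x * (n - x) / 2 : ℝ) ^ 2 := by
        rw [← ht, ← sum_zmod_val]
        simp only [cycleGreen, hval]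
    _ = ∑ x ∈ range t, (d : ℝ) ^ 2 / 4 * (t - 2 * (x : ℝ)) ^ 2
          + ∑ i ∈ range d, (t : ℝ) ^ 2 / 4 * (d - 2 * (i : ℝ)) ^ 2 := by
        rw [sum_range_add]
        congr 1
        · refine sum_congr rfl fun x hx => ?_
          rw [Nat.mod_eq_of_lt (by have := mem_range.1 hx; omega)]
          push_cast
          rw [htR]
          ring
        · refine sum_congr rfl fun i hi => ?_
          rw [show t + i + d = n + i by omega, Nat.add_mod_left,
            Nat.mod_eq_of_lt (by have := mem_range.1 hi; omega)]
          push_cast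
          rw [htR]
          ring
    _ = _ := by
        rw [← mul_sum, ← mul_sum, sum_range_sub_two_mul_sq, sum_range_sub_two_mul_sq]
        simp only [cycleGreen]
        rw [htR]
        ring

lemma cycleGreen_eq_min_mul (u : ZMod n) :
    cycleGreen n u = min u.val (-u).val * (n - min u.val (-u).val : ℝ) / 2 := by
  by_cases hu : u = 0
  · simp [hu]
  · rw [ZMod.neg_val, if_neg hu, cycleGreen]
    rcases le_total u.val (n - u.val) with h | h
    · rw [min_eq_left h]
    · rw [min_eq_right h, Nat.cast_sub (ZMod.val_lt u).le]
      ring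

lemma min_val_neg_le_half (u : ZMod n) : min u.val (-u).val ≤ n / 2 := by
  rw [ZMod.neg_val]
  split_ifs
  · simp
  · have := ZMod.val_lt u
    omega

end CycleGreen

lemma strictMonoOn_mul_sub (n : ℕ) :
    StrictMonoOn (fun e : ℕ => (e : ℝ) * (n - e) / 2) (Set.Iic (n / 2)) := by
  intro a (ha : a ≤ n / 2) b (hb : b ≤ n / 2) hab
  have hsum : (a : ℝ) + b < n := by exact_mod_cast (by omega : a + b < n)
  have hab' : (a : ℝ) < b := by exact_mod_cast hab
  dsimp only
  nlinarith

abbrev leaderMatrix (n : ℕ) (k : ℝ) (s₁ s₂ : ZMod n) : Matrix (ZMod n) (ZMod n) ℝ :=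
  cycleLaplacian n + k • single s₁ s₁ 1 + k • single s₂ s₂ 1

noncomputable def leaderWeight (n : ℕ) (k : ℝ) (s₁ s₂ v : ZMod n) : ℝ :=
  1 / (2 * k) + (cycleGreen n (v - s₂) - cycleGreen n (v - s₁)) /
    (2 * (n + k * cycleGreen n (s₁ - s₂)))

/-- Column `v` is a constant minus `(H (· - v) - a H (· - s₁) - b H (· - s₂)) / n` with `a = k α`,
`b = k β`, where `α = leaderWeight n k s₁ s₂ v` and `β = leaderWeight n k s₂ s₁ v` are its entries
at `s₁` and `s₂`. As `a + b = 1`, the Laplacian maps it to `δ_v - a δ_{s₁} - b δ_{s₂}`, and the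
leader terms `k α δ_{s₁} + k β δ_{s₂}` restore `δ_v`. -/
noncomputable def leaderInv (n : ℕ) (k : ℝ) (s₁ s₂ : ZMod n) : Matrix (ZMod n) (ZMod n) ℝ :=
  of fun u v => leaderWeight n k s₁ s₂ v +
    (cycleGreen n (v - s₁) - cycleGreen n (u - v)
      + k * leaderWeight n k s₁ s₂ v * cycleGreen n (u - s₁)
      + k * leaderWeight n k s₂ s₁ v * (cycleGreen n (u - s₂) - cycleGreen n (s₁ - s₂))) / n

noncomputable def leaderTrace (n : ℕ) (k h : ℝ) : ℝ :=
  n / (2 * k) + ((n : ℝ) ^ 2 - 1) / 6 - h / 2 - k * h * (h + 1) / (6 * (n + k * h))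

section LeaderInverse

variable {n : ℕ} [NeZero n] {k : ℝ} (s₁ s₂ : ZMod n)

lemma leaderWeight_add_leaderWeight_swap (v : ZMod n) :
    leaderWeight n k s₁ s₂ v + leaderWeight n k s₂ s₁ v = 1 / k := by
  simp only [leaderWeight, cycleGreen_sub_comm s₂ s₁]
  ring

lemma leaderInv_apply_left (v : ZMod n) :
    leaderInv n k s₁ s₂ s₁ v = leaderWeight n k s₁ s₂ v := by
  simp only [leaderInv, of_apply, cycleGreen_sub_comm s₁ v, sub_self, cycleGreen_zero]
  ring

lemma leaderInv_apply_right (hk : 0 ≤ k) (v : ZMod n) :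
    leaderInv n k s₁ s₂ s₂ v = leaderWeight n k s₂ s₁ v := by
  have hD := (natCast_add_mul_cycleGreen_pos hk (s₁ - s₂)).ne'
  have hn : (n : ℝ) ≠ 0 := NeZero.ne _
  simp only [leaderInv, leaderWeight, of_apply, cycleGreen_sub_comm s₂ v, sub_self,
    cycleGreen_zero, cycleGreen_sub_comm s₂ s₁]
  field_simp
  ring

lemma cycleLaplacian_mul_leaderInv_apply (hn : 3 ≤ n) (hk : k ≠ 0) (u v : ZMod n) :
    (cycleLaplacian n * leaderInv n k s₁ s₂) u v = (if u = v then 1 else 0)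
      - k * leaderWeight n k s₁ s₂ v * (if u = s₁ then 1 else 0)
      - k * leaderWeight n k s₂ s₁ v * (if u = s₂ then 1 else 0) := by
  have hweights : k * leaderWeight n k s₁ s₂ v + k * leaderWeight n k s₂ s₁ v = 1 := by
    rw [← mul_add, leaderWeight_add_leaderWeight_swap, mul_one_div_cancel hk]
  have hn' : (n : ℝ) ≠ 0 := NeZero.ne _
  rw [cycleLaplacian_mul_apply hn]
  simp only [leaderInv, of_apply]
  field_simp
  linear_combination (cycleGreen_sub_one_sub_add_add_one_sub u v)
    - k * leaderWeight n k s₁ s₂ v * cycleGreen_sub_one_sub_add_add_one_sub u s₁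
    - k * leaderWeight n k s₂ s₁ v * cycleGreen_sub_one_sub_add_add_one_sub u s₂ + hweights

lemma leaderMatrix_mul_leaderInv (hn : 3 ≤ n) (hk : 0 < k) :
    leaderMatrix n k s₁ s₂ * leaderInv n k s₁ s₂ = 1 := by
  have hsingle : ∀ s u v : ZMod n, (single s s (1 : ℝ) * leaderInv n k s₁ s₂) u v =
      if u = s then leaderInv n k s₁ s₂ s v else 0 := by
    intro s u v
    split_ifs with h
    · rw [h, single_mul_apply_same, one_mul]
    · exact single_mul_apply_of_ne _ _ _ _ _ h _
  ext u v
  simp only [leaderMatrix, add_mul, smul_mul, Matrix.add_apply, Matrix.smul_apply, smul_eq_mul,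
    hsingle, cycleLaplacian_mul_leaderInv_apply s₁ s₂ hn hk.ne', leaderInv_apply_left,
    leaderInv_apply_right s₁ s₂ hk.le, one_apply]
  split_ifs <;> ring

lemma leaderInv_apply_self (hk : 0 < k) (v : ZMod n) :
    leaderInv n k s₁ s₂ v v = 1 / (2 * k) - cycleGreen n (s₁ - s₂) / (2 * n)
      + (cycleGreen n (v - s₁) + cycleGreen n (v - s₂)) / n
      - k * (cycleGreen n (v - s₁) - cycleGreen n (v - s₂)) ^ 2
        / (2 * n * (n + k * cycleGreen n (s₁ - s₂))) := by
  have hD := (natCast_add_mul_cycleGreen_pos hk.le (s₁ - s₂)).ne'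
  have hn : (n : ℝ) ≠ 0 := NeZero.ne _
  have hk' : k ≠ 0 := hk.ne'
  simp only [leaderInv, leaderWeight, of_apply, sub_self, cycleGreen_zero,
    cycleGreen_sub_comm s₂ s₁]
  field_simp
  ring

lemma trace_leaderInv (hk : 0 < k) :
    (leaderInv n k s₁ s₂).trace = leaderTrace n k (cycleGreen n (s₁ - s₂)) := by
  have hshift (s : ZMod n) : ∑ v : ZMod n, cycleGreen n (v - s) = n * ((n : ℝ) ^ 2 - 1) / 12 :=
    (Equiv.subRight s).sum_comp (cycleGreen n) ▸ sum_cycleGreen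
  have hsq : ∑ v : ZMod n, (cycleGreen n (v - s₁) - cycleGreen n (v - s₂)) ^ 2 =
      n * cycleGreen n (s₁ - s₂) * (cycleGreen n (s₁ - s₂) + 1) / 3 := by
    rw [Fintype.sum_equiv (Equiv.subRight s₂) _
        (fun w => (cycleGreen n (w + (s₂ - s₁)) - cycleGreen n w) ^ 2)
        fun v => by rw [Equiv.subRight_apply, sub_add_sub_cancel],
      sum_sq_cycleGreen_add_sub, cycleGreen_sub_comm]
  have hD := (natCast_add_mul_cycleGreen_pos hk.le (s₁ - s₂)).ne'
  have hn : (n : ℝ) ≠ 0 := NeZero.ne _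
  have hk' : k ≠ 0 := hk.ne'
  simp only [trace, diag_apply, leaderInv_apply_self s₁ s₂ hk, sum_add_distrib, sum_sub_distrib,
    ← sum_div, ← mul_sum, sum_const, card_univ, ZMod.card, nsmul_eq_mul, hshift, hsq, leaderTrace]
  field_simp
  ring

end LeaderInverse

lemma leaderTrace_strictAntiOn {n : ℕ} {k : ℝ} (hn : 0 < n) (hk : 0 < k) :
    StrictAntiOn (leaderTrace n k) (Set.Ici 0) := by
  intro p (hp : 0 ≤ p) q (hq : 0 ≤ q) hpq
  have hmono : p * (p + 1) / (n + k * p) ≤ q * (q + 1) / (n + k * q) := by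
    rw [div_le_div_iff₀ (by positivity) (by positivity)]
    have : 0 ≤ (q - p) * (n * (q + p + 1) + k * p * q) :=
      mul_nonneg (sub_nonneg.2 hpq.le) (by positivity)
    linear_combination this
  simp only [leaderTrace, mul_assoc k, mul_div_mul_comm k]
  nlinarith [mul_le_mul_of_nonneg_left hmono (by positivity : 0 ≤ k / 6)]

theorem stmt_12_general {n : ℕ} (hn : 4 ≤ n) [NeZero n]
    (L : Matrix (ZMod n) (ZMod n) ℝ)
    (hLdef : ∀ i j : ZMod n,
      L i j = if i = j then 2 else if i - j = 1 ∨ j - i = 1 then -1 else 0)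
    (k : ℝ) (hk : 0 < k)
    (T : ZMod n → ZMod n → ℝ)
    (hT : ∀ s₁ s₂ : ZMod n, T s₁ s₂ =
      ((L + k • Matrix.single s₁ s₁ (1 : ℝ)
        + k • Matrix.single s₂ s₂ (1 : ℝ))⁻¹).trace)
    (s₁ s₂ t₁ t₂ : ZMod n)
    (htdist : min (t₁ - t₂).val (t₂ - t₁).val = n / 2) :
    T t₁ t₂ ≤ T s₁ s₂ ∧
    (T s₁ s₂ = T t₁ t₂ ↔ min (s₁ - s₂).val (s₂ - s₁).val = n / 2) := by
  have hL : L = cycleLaplacian n := ext hLdef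
  have hTdist (a b : ZMod n) : T a b = leaderTrace n k
      (min (a - b).val (b - a).val * (n - min (a - b).val (b - a).val : ℝ) / 2) := by
    rw [hT, hL, inv_eq_right_inv (leaderMatrix_mul_leaderInv a b (by omega) hk),
      trace_leaderInv a b hk, cycleGreen_eq_min_mul, neg_sub]
  have hanti : StrictAntiOn (fun e : ℕ => leaderTrace n k (e * (n - e : ℝ) / 2))
      (Set.Iic (n / 2)) :=
    (leaderTrace_strictAntiOn (NeZero.pos n) hk).comp_strictMonoOn (strictMonoOn_mul_sub n)
      fun e (he : e ≤ n / 2) => by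
        have : (e : ℝ) ≤ n := by exact_mod_cast (by omega : e ≤ n)
        exact div_nonneg (mul_nonneg e.cast_nonneg (sub_nonneg.2 this)) zero_le_two
  have hs : min (s₁ - s₂).val (s₂ - s₁).val ∈ Set.Iic (n / 2) := by
    rw [Set.mem_Iic, ← neg_sub s₁]
    exact min_val_neg_le_half (s₁ - s₂)
  rw [hTdist, hTdist, htdist]
  exact ⟨hanti.antitoneOn hs Set.self_mem_Iic hs, hanti.injOn.eq_iff hs Set.self_mem_Iic⟩

/-- Optimal two noise-corrupted leaders on an even cycle. Let `n ≥ 4` be even,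
`L` the Laplacian of the cycle `C_n` (vertices `ZMod n`), `k > 0`, and for distinct vertices
`s₁ ≠ s₂` let `T s₁ s₂ = tr((L + k E_{s₁s₁} + k E_{s₂s₂})⁻¹)`. Then `T` is minimized exactly at
antipodal pairs: if `t₁ ≠ t₂` have geodesic distance `n/2`, then `T t₁ t₂ ≤ T s₁ s₂` for all
distinct `s₁, s₂`, with equality iff `dist(s₁,s₂) = n/2`. -/
theorem stmt_12 {n : ℕ} (hn : 4 ≤ n) (hne : Even n) [NeZero n]
    (L : Matrix (ZMod n) (ZMod n) ℝ)
    (hLdef : ∀ i j : ZMod n,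
      L i j = if i = j then 2 else if i - j = 1 ∨ j - i = 1 then -1 else 0)
    (k : ℝ) (hk : 0 < k)
    (T : ZMod n → ZMod n → ℝ)
    (hT : ∀ s₁ s₂ : ZMod n, T s₁ s₂ =
      ((L + k • Matrix.single s₁ s₁ (1 : ℝ)
        + k • Matrix.single s₂ s₂ (1 : ℝ))⁻¹).trace)
    (s₁ s₂ t₁ t₂ : ZMod n) (hs : s₁ ≠ s₂) (ht : t₁ ≠ t₂)
    (htdist : min (t₁ - t₂).val (t₂ - t₁).val = n / 2) :
    T t₁ t₂ ≤ T s₁ s₂ ∧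
    (T s₁ s₂ = T t₁ t₂ ↔ min (s₁ - s₂).val (s₂ - s₁).val = n / 2) :=
  stmt_12_general hn L hLdef k hk T hT s₁ s₂ t₁ t₂ htdist
end
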